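/- arXiv:1011.5443 — 3 statements merged into one kernel-verified Lean document; each statement's English description precedes it below -/
import Mathlib

section
/- Let (V₁, V₂) be an (ε, p)-regular pair in a graph G, and let G' be a subgraph of G obtained by removing at most ε³p|V₁||V₂| of the edges between V₁ and V₂. Then (V₁, V₂) is (3ε, p)-regular in G'. -/
open Finset

open scoped Classical

noncomputable section

namespace RandomTriangle

/-- Number of ordered adjacent pairs between `X` and `Y`. -/
def eBtw {V : Type*} (G : SimpleGraph V) (X Y : Finset V) : ℕ :=
  ((X ×ˢ Y).filter fun a => G.Adj a.1 a.2).card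

/-- Edge density between `X` and `Y`. -/
def dens {V : Type*} (G : SimpleGraph V) (X Y : Finset V) : ℝ :=
  (eBtw G X Y : ℝ) / ((X.card : ℝ) * (Y.card : ℝ))

/-- Number of neighbours of `v` in `X`. -/
def degIn {V : Type*} (G : SimpleGraph V) (v : V) (X : Finset V) : ℕ :=
  (X.filter fun w => G.Adj v w).card

/-- Neighbourhood of `v` inside `X`. -/
def nbhdIn {V : Type*} (G : SimpleGraph V) (v : V) (X : Finset V) : Finset V :=
  X.filter fun w => G.Adj v w

/-- Number of common neighbours of `u` and `w` inside `X`. -/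
def codegIn {V : Type*} (G : SimpleGraph V) (u w : V) (X : Finset V) : ℕ :=
  (X.filter fun x => G.Adj u x ∧ G.Adj w x).card

/-- `(ε, p)`-regular pair `(X, Y)`. -/
def RegularPair {V : Type*} (G : SimpleGraph V) (ε p : ℝ) (X Y : Finset V) : Prop :=
  ∀ X' ⊆ X, ∀ Y' ⊆ Y, ε * X.card ≤ (X'.card : ℝ) → ε * Y.card ≤ (Y'.card : ℝ) →
    |dens G X Y - dens G X' Y'| ≤ ε * p

/-- `(ε, p)`-regular triple. -/
def RegularTriple {V : Type*} (G : SimpleGraph V) (ε p : ℝ) (V₁ V₂ V₃ : Finset V) : Prop :=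
  RegularPair G ε p V₁ V₂ ∧ RegularPair G ε p V₁ V₃ ∧ RegularPair G ε p V₂ V₃

/-- `v ∈ V₁` is an `ε`-typical vertex of the triple `(V₁, V₂, V₃)`:
its neighbourhoods in `V₂`, `V₃` have the expected size `(1 ± ε)·d₁ᵢp|Vᵢ|`
(note `d₁ᵢ p = dens G V₁ Vᵢ`), and they contain large subsets forming an
`(ε, p)`-regular pair of density `(1 ± ε)·d₂₃p`. -/
def TypicalVertex {V : Type*} (G : SimpleGraph V) (ε p : ℝ) (V₁ V₂ V₃ : Finset V) (v : V) :
    Prop :=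
  ((1 - ε) * (dens G V₁ V₂ * V₂.card) ≤ ((nbhdIn G v V₂).card : ℝ) ∧
    ((nbhdIn G v V₂).card : ℝ) ≤ (1 + ε) * (dens G V₁ V₂ * V₂.card)) ∧
  ((1 - ε) * (dens G V₁ V₃ * V₃.card) ≤ ((nbhdIn G v V₃).card : ℝ) ∧
    ((nbhdIn G v V₃).card : ℝ) ≤ (1 + ε) * (dens G V₁ V₃ * V₃.card)) ∧
  ∃ N₂' ⊆ nbhdIn G v V₂, ∃ N₃' ⊆ nbhdIn G v V₃,
    (1 - ε) * ((nbhdIn G v V₂).card : ℝ) ≤ (N₂'.card : ℝ) ∧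
    (1 - ε) * ((nbhdIn G v V₃).card : ℝ) ≤ (N₃'.card : ℝ) ∧
    RegularPair G ε p N₂' N₃' ∧
    (1 - ε) * dens G V₂ V₃ ≤ dens G N₂' N₃' ∧
    dens G N₂' N₃' ≤ (1 + ε) * dens G V₂ V₃

/-- An `ε`-typical triple: `(ε,p)`-regular and in each part all but at most an
`ε`-fraction of the vertices are `ε`-typical. -/
def TypicalTriple {V : Type*} (G : SimpleGraph V) (ε p : ℝ) (V₁ V₂ V₃ : Finset V) : Prop :=
  RegularTriple G ε p V₁ V₂ V₃ ∧
  ((V₁.filter fun v => ¬ TypicalVertex G ε p V₁ V₂ V₃ v).card : ℝ) ≤ ε * V₁.card ∧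
  ((V₂.filter fun v => ¬ TypicalVertex G ε p V₂ V₁ V₃ v).card : ℝ) ≤ ε * V₂.card ∧
  ((V₃.filter fun v => ¬ TypicalVertex G ε p V₃ V₁ V₂ v).card : ℝ) ≤ ε * V₃.card

/-- A `(δ, ε, p)`-super-regular triple. -/
def SuperRegularTriple {V : Type*} (G : SimpleGraph V) (δ ε p : ℝ) (V₁ V₂ V₃ : Finset V) :
    Prop :=
  RegularTriple G ε p V₁ V₂ V₃ ∧
  δ * p ≤ dens G V₁ V₂ ∧ δ * p ≤ dens G V₁ V₃ ∧ δ * p ≤ dens G V₂ V₃ ∧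
  (∀ v ∈ V₁, TypicalVertex G ε p V₁ V₂ V₃ v) ∧
  (∀ v ∈ V₂, TypicalVertex G ε p V₂ V₁ V₃ v) ∧
  (∀ v ∈ V₃, TypicalVertex G ε p V₃ V₁ V₂ v)

/-- An edge `(u, w)` with `u ∈ V₂`, `w ∈ V₃` is `ε`-good (w.r.t. `V₁`) if its endpoints
have at least `(1 - ε)·d₁₂d₁₃p²|V₁|` common neighbours in `V₁`
(note `d₁₂d₁₃p² = dens G V₁ V₂ * dens G V₁ V₃`). -/
def GoodEdge {V : Type*} (G : SimpleGraph V) (ε : ℝ) (V₁ V₂ V₃ : Finset V) (u w : V) : Prop :=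
  (1 - ε) * (dens G V₁ V₂ * dens G V₁ V₃ * V₁.card) ≤ (codegIn G u w V₁ : ℝ)

/-- An `ε`-typical vertex `v ∈ V₁` is `ε`-good if the pair of its neighbourhoods in
`V₂`, `V₃` spans at most `ε·d₁₂d₁₃d₂₃p³|V₂||V₃|` edges that are not `ε`-good. -/
def GoodVertex {V : Type*} (G : SimpleGraph V) (ε p : ℝ) (V₁ V₂ V₃ : Finset V) (v : V) :
    Prop :=
  TypicalVertex G ε p V₁ V₂ V₃ v ∧
  ((((nbhdIn G v V₂) ×ˢ (nbhdIn G v V₃)).filter fun uw =>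
      G.Adj uw.1 uw.2 ∧ ¬ GoodEdge G ε V₁ V₂ V₃ uw.1 uw.2).card : ℝ) ≤
    ε * (dens G V₁ V₂ * dens G V₁ V₃ * dens G V₂ V₃ * V₂.card * V₃.card)

/-- A `(δ, ε, p)`-strong-super-regular triple. -/
def StrongSuperRegularTriple {V : Type*} (G : SimpleGraph V) (δ ε p : ℝ)
    (V₁ V₂ V₃ : Finset V) : Prop :=
  SuperRegularTriple G δ ε p V₁ V₂ V₃ ∧
  (∀ v ∈ V₁, GoodVertex G ε p V₁ V₂ V₃ v) ∧
  (∀ v ∈ V₂, GoodVertex G ε p V₂ V₁ V₃ v) ∧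
  (∀ v ∈ V₃, GoodVertex G ε p V₃ V₁ V₂ v)

/-- A triangle packing: a collection of pairwise vertex-disjoint triangles of `G`. -/
def IsTrianglePacking {V : Type*} [DecidableEq V] (G : SimpleGraph V)
    (T : Finset (Finset V)) : Prop :=
  (∀ t ∈ T, t.card = 3 ∧ ∀ x ∈ t, ∀ y ∈ t, x ≠ y → G.Adj x y) ∧
  (∀ s ∈ T, ∀ t ∈ T, s ≠ t → Disjoint s t)

def idx0 {k : ℕ} (t : Fin k) : Fin (3 * k) := ⟨3 * t.1, by have := t.2; omega⟩
def idx1 {k : ℕ} (t : Fin k) : Fin (3 * k) := ⟨3 * t.1 + 1, by have := t.2; omega⟩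
def idx2 {k : ℕ} (t : Fin k) : Fin (3 * k) := ⟨3 * t.1 + 2, by have := t.2; omega⟩

/-- The endpoints of every edge between `A` and `B` have at most `4|C|p²` common
neighbours in `C`. -/
def CodegBound {V : Type*} (G : SimpleGraph V) (p : ℝ) (A B C : Finset V) : Prop :=
  ∀ u ∈ A, ∀ w ∈ B, G.Adj u w → (codegIn G u w C : ℝ) ≤ 4 * C.card * p ^ 2

/-- The probability, in the Erdős–Rényi random graph `G(n, p)`, of the event `A`. -/
def gnpProb (n : ℕ) (p : ℝ) (A : Set (SimpleGraph (Fin n))) : ℝ :=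
  ∑ G ∈ Finset.univ.filter (fun G => G ∈ A),
    p ^ ((Finset.univ.filter fun e : Sym2 (Fin n) => e ∈ G.edgeSet).card) *
      (1 - p) ^ (n.choose 2 - (Finset.univ.filter fun e : Sym2 (Fin n) => e ∈ G.edgeSet).card)

/-- A sequence of graph properties holds asymptotically almost surely in `G(n, p n)`. -/
def AAS (p : ℕ → ℝ) (P : ∀ n : ℕ, SimpleGraph (Fin n) → Prop) : Prop :=
  Filter.Tendsto (fun n => gnpProb n (p n) {G | P n G}) Filter.atTop (nhds 1)

end RandomTriangle

open RandomTriangle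

/-! Deleting a set `D` of edges moves each density `d(S, T)` by the density of `D` on `(S, T)`.
Since `D` has at most `ε³p|V₁||V₂|` edges and the relevant sets satisfy `|S||T| ≥ 9ε²|V₁||V₂|`,
that density is at most `εp/9`, both for `(V₁, V₂)` and for the test pair `(X', Y')`.
The triangle inequality then gives `|d'(V₁, V₂) - d'(X', Y')| ≤ εp + 2εp/9 ≤ 3εp`. -/

namespace RandomTriangle

variable {V : Type*} {G G' H : SimpleGraph V} {X Y X' Y' : Finset V}

lemma eBtw_mono (hX : X' ⊆ X) (hY : Y' ⊆ Y) : eBtw H X' Y' ≤ eBtw H X Y :=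
  card_le_card (filter_subset_filter _ (product_subset_product hX hY))

lemma eBtw_add_eBtw_sdiff (h : G' ≤ G) (X Y : Finset V) :
    eBtw G' X Y + eBtw (G \ G') X Y = eBtw G X Y := by
  unfold eBtw
  rw [← card_filter_add_card_filter_not (s := (X ×ˢ Y).filter fun a => G.Adj a.1 a.2)
    (fun a => G'.Adj a.1 a.2), filter_filter, filter_filter]
  congr 2
  · exact filter_congr fun a _ => ⟨fun h' => ⟨h h', h'⟩, And.right⟩
  · ext a
    simp only [mem_filter, SimpleGraph.sdiff_adj]

lemma dens_nonneg : 0 ≤ dens H X Y := by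
  unfold dens
  positivity

lemma dens_sub_dens_eq_dens_sdiff (h : G' ≤ G) :
    dens G X Y - dens G' X Y = dens (G \ G') X Y := by
  unfold dens
  rw [← eBtw_add_eBtw_sdiff h X Y, Nat.cast_add, add_div]
  ring

lemma dens_le_of_eBtw_le {c α β : ℝ} (hc : 0 ≤ c) (hα : 0 < α) (hβ : 0 < β)
    (he : (eBtw H X Y : ℝ) ≤ c * X.card * Y.card) (hX : X' ⊆ X) (hY : Y' ⊆ Y)
    (hX' : α * X.card ≤ X'.card) (hY' : β * Y.card ≤ Y'.card) :
    dens H X' Y' ≤ c / (α * β) := by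
  have hbound : 0 ≤ c / (α * β) := by positivity
  rcases X'.eq_empty_or_nonempty with rfl | hX'ne
  · simpa [dens] using hbound
  rcases Y'.eq_empty_or_nonempty with rfl | hY'ne
  · simpa [dens] using hbound
  have hsizes : α * β * (X.card * Y.card) ≤ (X'.card : ℝ) * Y'.card := by
    rw [mul_mul_mul_comm]
    exact mul_le_mul hX' hY' (by positivity) (Nat.cast_nonneg _)
  rw [dens, div_le_iff₀ (by positivity)]
  calc (eBtw H X' Y' : ℝ) ≤ eBtw H X Y := by exact_mod_cast eBtw_mono hX hY
    _ ≤ c * X.card * Y.card := he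
    _ = c / (α * β) * (α * β * (X.card * Y.card)) := by field_simp
    _ ≤ c / (α * β) * (X'.card * Y'.card) := mul_le_mul_of_nonneg_left hsizes hbound

lemma RegularPair.of_abs_dens_sub_le {ε ε' p η : ℝ} (hreg : RegularPair G ε p X Y)
    (hεε' : ε ≤ ε') (hη : ε * p + 2 * η ≤ ε' * p)
    (hclose : ∀ S ⊆ X, ∀ T ⊆ Y, ε' * X.card ≤ (S.card : ℝ) → ε' * Y.card ≤ (T.card : ℝ) →
      |dens G S T - dens G' S T| ≤ η) :
    RegularPair G' ε' p X Y := by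
  intro X' hX' Y' hY' hXc hYc
  have hXX : ε' * X.card ≤ (X.card : ℝ) := hXc.trans (by exact_mod_cast card_le_card hX')
  have hYY : ε' * Y.card ≤ (Y.card : ℝ) := hYc.trans (by exact_mod_cast card_le_card hY')
  have hfull := hclose X subset_rfl Y subset_rfl hXX hYY
  have htest := hclose X' hX' Y' hY' hXc hYc
  have hG := hreg X' hX' Y' hY'
    ((mul_le_mul_of_nonneg_right hεε' (Nat.cast_nonneg _)).trans hXc)
    ((mul_le_mul_of_nonneg_right hεε' (Nat.cast_nonneg _)).trans hYc)
  rw [abs_le] at hfull htest hG ⊢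
  constructor <;> linarith

end RandomTriangle

theorem stmt_3_general {V : Type*} (G G' : SimpleGraph V)
    (ε p : ℝ) (hε : 0 < ε) (hp : 0 < p)
    (V₁ V₂ : Finset V)
    (hreg : RegularPair G ε p V₁ V₂)
    (hsub : G' ≤ G)
    (hdel : (eBtw G V₁ V₂ : ℝ) - (eBtw G' V₁ V₂ : ℝ) ≤ ε ^ 3 * p * V₁.card * V₂.card) :
    RegularPair G' (3 * ε) p V₁ V₂ := by
  have hdeleted : (eBtw (G \ G') V₁ V₂ : ℝ) ≤ ε ^ 3 * p * V₁.card * V₂.card := by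
    rw [← eBtw_add_eBtw_sdiff hsub V₁ V₂, Nat.cast_add] at hdel
    linarith
  refine hreg.of_abs_dens_sub_le (η := ε * p / 9) (by linarith) (by nlinarith) ?_
  intro S hS T hT hSc hTc
  rw [dens_sub_dens_eq_dens_sdiff hsub, abs_of_nonneg dens_nonneg]
  calc dens (G \ G') S T ≤ ε ^ 3 * p / (3 * ε * (3 * ε)) :=
        dens_le_of_eBtw_le (by positivity) (by positivity) (by positivity) hdeleted hS hT hSc hTc
    _ = ε * p / 9 := by field_simp; ring

/-- **Proposition (regularity after edge deletion).** If `(V₁,V₂)` is `(ε,p)`-regular in `G`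
and `G' ≤ G` is obtained by removing at most `ε³p|V₁||V₂|` of the edges between `V₁` and `V₂`,
then `(V₁,V₂)` is `(3ε,p)`-regular in `G'`. -/
theorem stmt_3 {V : Type*} [Fintype V] [DecidableEq V] (G G' : SimpleGraph V)
    (ε p : ℝ) (hε : 0 < ε) (hp : 0 < p)
    (V₁ V₂ : Finset V) (hdisj : Disjoint V₁ V₂)
    (hreg : RegularPair G ε p V₁ V₂)
    (hsub : G' ≤ G)
    (hdel : (eBtw G V₁ V₂ : ℝ) - (eBtw G' V₁ V₂ : ℝ) ≤ ε ^ 3 * p * V₁.card * V₂.card) :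
    RegularPair G' (3 * ε) p V₁ V₂ :=
  stmt_3_general G G' ε p hε hp V₁ V₂ hreg hsub hdel
end
end

section
/- For every positive α, δ, and p, there exists ε = ε(α, δ) > 0 such that every ε-typical (ε, p)-regular triple (V₁, V₂, V₃) in which each of the three pairwise densities is at least δp contains at least (1 − α)·min{|V₁|, |V₂|, |V₃|} vertex-disjoint triangles. -/
open Finset

open scoped Classical

noncomputable section

open RandomTriangle

/-!
Take a maximal packing `T` of triangles meeting each `Vᵢ` once, let `R` be the set of covered
vertices, and suppose `|T| < (1 - β) minᵢ |Vᵢ|`. A typical vertex `v ∈ V₁ \ R` cannot have a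
`2ε`-fraction of its neighbourhoods in both `V₂` and `V₃` outside `R`: the regular pair inside
these neighbourhoods would then supply an edge `uw` avoiding `R`, and `vuw` would extend `T`.
So at least `(β - ε)|V₁|` vertices of `V₁` send almost all their edges towards `V₂`, or towards
`V₃`, into `R`. For `ε|V₁|` such vertices, regularity of `(V₁, Vⱼ)` caps the density towards
`Vⱼ ∩ R` at `d₁ⱼ + εp`, which forces `|Vⱼ ∩ R| ≥ (1 - β)|Vⱼ|`; but `|Vⱼ ∩ R| ≤ |T|`.
-/

namespace RandomTriangle

section Density

variable {V : Type*} (G : SimpleGraph V)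

lemma eBtw_eq_sum_card_nbhdIn (X Y : Finset V) :
    eBtw G X Y = ∑ v ∈ X, (nbhdIn G v Y).card := by
  rw [eBtw, card_filter, sum_product]
  exact sum_congr rfl fun x _ => (card_filter _ _).symm

lemma eBtw_eq_dens_mul (X Y : Finset V) :
    (eBtw G X Y : ℝ) = dens G X Y * (X.card * Y.card) := by
  rcases eq_or_ne ((X.card : ℝ) * Y.card) 0 with h | h
  · have hle : eBtw G X Y ≤ X.card * Y.card := card_product X Y ▸ card_filter_le _ _
    have h0 : X.card * Y.card = 0 := by exact_mod_cast h
    simp [h, show eBtw G X Y = 0 by omega]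
  · rw [dens, div_mul_cancel₀ _ h]

lemma card_pos_of_dens_pos {X Y : Finset V} (h : 0 < dens G X Y) :
    0 < X.card ∧ 0 < Y.card := by
  have hXY : (X.card : ℝ) * Y.card ≠ 0 := fun h0 => by simp [dens, h0] at h
  simpa [Nat.pos_iff_ne_zero] using hXY

lemma exists_adj_of_dens_pos {X Y : Finset V} (h : 0 < dens G X Y) :
    ∃ u ∈ X, ∃ w ∈ Y, G.Adj u w := by
  have he : 0 < eBtw G X Y := by
    by_contra! h0
    simp [dens, Nat.le_zero.mp h0] at h
  obtain ⟨⟨u, w⟩, huw⟩ := card_pos.mp he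
  rw [mem_filter, mem_product] at huw
  exact ⟨u, huw.1.1, w, huw.1.2, huw.2⟩

end Density

lemma nbhdIn_inter {V : Type*} [DecidableEq V] (G : SimpleGraph V) (v : V) (W R : Finset V) :
    nbhdIn G v (W ∩ R) = nbhdIn G v W ∩ R :=
  (filter_inter _ _ _).symm

namespace RegularPair

variable {V : Type*} {G : SimpleGraph V} {ε p : ℝ} {X Y : Finset V}

lemma exists_adj (hreg : RegularPair G ε p X Y) (hd : ε * p < dens G X Y)
    {X' Y' : Finset V} (hX' : X' ⊆ X) (hY' : Y' ⊆ Y)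
    (hX'card : ε * X.card ≤ X'.card) (hY'card : ε * Y.card ≤ Y'.card) :
    ∃ u ∈ X', ∃ w ∈ Y', G.Adj u w :=
  exists_adj_of_dens_pos G <| by
    linarith [(abs_le.mp (hreg X' hX' Y' hY' hX'card hY'card)).2]

lemma le_dens_add_mul_card (hreg : RegularPair G ε p X Y) {B R : Finset V}
    (hB : B ⊆ X) (hBne : B.Nonempty) (hBcard : ε * X.card ≤ B.card)
    (hR : R ⊆ Y) (hRcard : ε * Y.card ≤ R.card) {a : ℝ}
    (ha : ∀ v ∈ B, a ≤ (nbhdIn G v R).card) :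
    a ≤ (dens G X Y + ε * p) * R.card := by
  have hB0 : (0 : ℝ) < B.card := by exact_mod_cast hBne.card_pos
  have hdens : dens G B R ≤ dens G X Y + ε * p := by
    linarith [(abs_le.mp (hreg B hB R hR hBcard hRcard)).1]
  refine le_of_mul_le_mul_left ?_ hB0
  calc B.card * a = ∑ _v ∈ B, a := by rw [sum_const, nsmul_eq_mul]
    _ ≤ ∑ v ∈ B, ((nbhdIn G v R).card : ℝ) := sum_le_sum ha
    _ = dens G B R * (B.card * R.card) := by
      rw [← eBtw_eq_dens_mul, eBtw_eq_sum_card_nbhdIn]; push_cast; rfl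
    _ ≤ (dens G X Y + ε * p) * (B.card * R.card) := by gcongr
    _ = B.card * ((dens G X Y + ε * p) * R.card) := by ring

end RegularPair

lemma one_sub_mul_le_of_mul_le_add_mul {ε β δ p D w r : ℝ} (hε : 0 < ε) (hδ : 0 < δ)
    (hp : 0 < p) (hεβ : 8 * ε ≤ β) (hεβδ : 8 * ε ≤ β * δ) (hD : δ * p ≤ D) (hw : 0 ≤ w)
    (hr : 0 ≤ r) (h : (1 - 2 * ε) * ((1 - ε) * (D * w)) ≤ (D + ε * p) * r) :
    (1 - β) * w ≤ r := by
  have hD0 : 0 < D := (mul_pos hδ hp).trans_le hD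
  -- `D / (D + εp)` is increasing in `D`, so it is at least `δ / (δ + ε)`.
  have hδr : (1 - 2 * ε) * (1 - ε) * δ * w ≤ (δ + ε) * r := by
    refine le_of_mul_le_mul_left ?_ hD0
    nlinarith [mul_le_mul_of_nonneg_left h hδ.le,
      mul_le_mul_of_nonneg_left hD (mul_nonneg hε.le hr)]
  have hcoef : (1 - β) * (δ + ε) ≤ (1 - 2 * ε) * (1 - ε) * δ := by
    nlinarith [mul_le_mul_of_nonneg_right hεβ hδ.le, mul_nonneg hε.le hε.le, mul_pos hε hδ]
  have hδε : 0 < δ + ε := by linarith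
  refine le_of_mul_le_mul_left ?_ hδε
  nlinarith [mul_le_mul_of_nonneg_right hcoef hw]

section TypicalVertex

variable {V : Type*} [DecidableEq V] {G : SimpleGraph V} {ε p : ℝ}

lemma le_card_sdiff_of_card_inter_le (hε : 0 ≤ ε) {N N' R : Finset V} (hN' : N' ⊆ N)
    (hN'card : (1 - ε) * N.card ≤ N'.card) (hR : ((N ∩ R).card : ℝ) ≤ (1 - 2 * ε) * N.card) :
    ε * N'.card ≤ ((N' \ R).card : ℝ) := by
  have hsplit : ((N' \ R).card : ℝ) + (N' ∩ R).card = N'.card := by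
    exact_mod_cast card_sdiff_add_card_inter N' R
  have hinter : ((N' ∩ R).card : ℝ) ≤ (N ∩ R).card := by
    exact_mod_cast card_le_card (inter_subset_inter_right hN')
  have hle : (N'.card : ℝ) ≤ N.card := by exact_mod_cast card_le_card hN'
  nlinarith

lemma TypicalVertex.exists_adj_sdiff {V₁ V₂ V₃ : Finset V} {v : V}
    (hv : TypicalVertex G ε p V₁ V₂ V₃ v) (hε : 0 ≤ ε) (hd : ε * p < (1 - ε) * dens G V₂ V₃)
    {R : Finset V} (h₂ : ((nbhdIn G v V₂ ∩ R).card : ℝ) ≤ (1 - 2 * ε) * (nbhdIn G v V₂).card)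
    (h₃ : ((nbhdIn G v V₃ ∩ R).card : ℝ) ≤ (1 - 2 * ε) * (nbhdIn G v V₃).card) :
    ∃ u ∈ nbhdIn G v V₂ \ R, ∃ w ∈ nbhdIn G v V₃ \ R, G.Adj u w := by
  obtain ⟨-, -, N₂, hN₂, N₃, hN₃, hN₂card, hN₃card, hreg, hdens, -⟩ := hv
  obtain ⟨u, hu, w, hw, huw⟩ := hreg.exists_adj (by linarith) sdiff_subset sdiff_subset
    (le_card_sdiff_of_card_inter_le hε hN₂ hN₂card h₂)
    (le_card_sdiff_of_card_inter_le hε hN₃ hN₃card h₃)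
  exact ⟨u, sdiff_subset_sdiff hN₂ le_rfl hu, w, sdiff_subset_sdiff hN₃ le_rfl hw, huw⟩

end TypicalVertex

lemma RegularPair.card_lt_of_card_inter_lt {V : Type*} [DecidableEq V] {G : SimpleGraph V}
    {ε p β δ : ℝ} {X W R B : Finset V} (hreg : RegularPair G ε p X W) (hε : 0 < ε)
    (hδ : 0 < δ) (hp : 0 < p) (hεβ : 8 * ε ≤ β) (hεβδ : 8 * ε ≤ β * δ) (hεδp : 4 * ε ≤ δ * p)
    (hd : δ * p ≤ dens G X W) (hR : ((W ∩ R).card : ℝ) < (1 - β) * W.card) (hB : B ⊆ X)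
    (hblocked : ∀ v ∈ B, (1 - ε) * (dens G X W * W.card) ≤ (nbhdIn G v W).card ∧
      (1 - 2 * ε) * (nbhdIn G v W).card < (nbhdIn G v W ∩ R).card) :
    (B.card : ℝ) < ε * X.card := by
  by_contra! hBcard
  set D := dens G X W
  have hD : 0 < D := (mul_pos hδ hp).trans_le hd
  have hX : (0 : ℝ) < X.card := by exact_mod_cast (card_pos_of_dens_pos G hD).1
  obtain ⟨v, hv⟩ : B.Nonempty := card_pos.mp (by exact_mod_cast (mul_pos hε hX).trans_le hBcard)
  have hβ : β < 1 := by
    by_contra! hβ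
    nlinarith [(W ∩ R).card.cast_nonneg (α := ℝ), W.card.cast_nonneg (α := ℝ)]
  have ha : ∀ v ∈ B, (1 - 2 * ε) * ((1 - ε) * (D * W.card)) ≤ (nbhdIn G v (W ∩ R)).card := by
    intro v hv
    obtain ⟨hdeg, hinter⟩ := hblocked v hv
    rw [nbhdIn_inter]
    nlinarith [mul_le_mul_of_nonneg_left hdeg (by linarith : (0 : ℝ) ≤ 1 - 2 * ε)]
  have hRa : ((nbhdIn G v (W ∩ R)).card : ℝ) ≤ (W ∩ R).card := by
    exact_mod_cast card_le_card (filter_subset _ _)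
  have hRcard : ε * W.card ≤ (W ∩ R).card := by
    have hcoef : 1 / 2 ≤ (1 - 2 * ε) * (1 - ε) := by nlinarith
    have hεD : ε ≤ (1 - 2 * ε) * (1 - ε) * D := by
      nlinarith [mul_le_mul hcoef (hεδp.trans hd) (by positivity) (by linarith)]
    nlinarith [ha v hv, mul_le_mul_of_nonneg_right hεD (W.card.cast_nonneg (α := ℝ))]
  have hcover := hreg.le_dens_add_mul_card hB ⟨v, hv⟩ hBcard inter_subset_left hRcard ha
  exact hR.not_ge <| one_sub_mul_le_of_mul_le_add_mul hε hδ hp hεβ hεβδ hd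
    (Nat.cast_nonneg _) (Nat.cast_nonneg _) hcover

section Packing

variable {V : Type*} [DecidableEq V] {G : SimpleGraph V} {V₁ V₂ V₃ : Finset V}

def IsTransversalTrianglePacking (G : SimpleGraph V) (V₁ V₂ V₃ : Finset V)
    (T : Finset (Finset V)) : Prop :=
  IsTrianglePacking G T ∧ ∀ t ∈ T, (t ∩ V₁).card = 1 ∧ (t ∩ V₂).card = 1 ∧ (t ∩ V₃).card = 1

lemma card_inter_biUnion_le {W : Finset V} {T : Finset (Finset V)}
    (h : ∀ t ∈ T, (t ∩ W).card ≤ 1) : (W ∩ T.biUnion id).card ≤ T.card := by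
  rw [inter_biUnion]
  simpa using card_biUnion_le_card_mul T (fun t => W ∩ t) 1 fun t ht => inter_comm W t ▸ h t ht

lemma card_le_card_filter_sdiff_add (s R : Finset V) (P : V → Prop) [DecidablePred P] :
    s.card ≤ ((s \ R).filter P).card + (s.filter fun v => ¬ P v).card + (s ∩ R).card := by
  have hsplit := card_sdiff_add_card_inter s R
  have hfilter := card_filter_add_card_filter_not (s := s \ R) P
  have hsub := card_le_card (filter_subset_filter (fun v => ¬ P v) (sdiff_subset : s \ R ⊆ s))
  omega

lemma exists_maximal_isTransversalTrianglePacking [Fintype V] (G : SimpleGraph V)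
    (V₁ V₂ V₃ : Finset V) :
    ∃ T, IsTransversalTrianglePacking G V₁ V₂ V₃ T ∧
      ∀ T', IsTransversalTrianglePacking G V₁ V₂ V₃ T' → T'.card ≤ T.card := by
  obtain ⟨T, hT, hmax⟩ := exists_max_image (univ.filter (IsTransversalTrianglePacking G V₁ V₂ V₃))
    card ⟨∅, by simp [IsTransversalTrianglePacking, IsTrianglePacking]⟩
  exact ⟨T, (mem_filter.mp hT).2, fun T' hT' => hmax T' (mem_filter.mpr ⟨mem_univ _, hT'⟩)⟩

namespace IsTransversalTrianglePacking

variable {T : Finset (Finset V)}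

lemma insert_triangle (hT : IsTransversalTrianglePacking G V₁ V₂ V₃ T)
    (h12 : Disjoint V₁ V₂) (h13 : Disjoint V₁ V₃) (h23 : Disjoint V₂ V₃) {v u w : V}
    (hv : v ∈ V₁) (hu : u ∈ V₂) (hw : w ∈ V₃) (hvu : G.Adj v u) (hvw : G.Adj v w)
    (huw : G.Adj u w) (hfree : ∀ x ∈ ({v, u, w} : Finset V), x ∉ T.biUnion id) :
    IsTransversalTrianglePacking G V₁ V₂ V₃ (insert {v, u, w} T) := by
  have hclique : G.IsNClique 3 {v, u, w} := SimpleGraph.is3Clique_triple_iff.mpr ⟨hvu, hvw, huw⟩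
  have hdisj : ∀ s ∈ T, Disjoint {v, u, w} s := fun s hs =>
    disjoint_left.mpr fun x hx hxs => hfree x hx (mem_biUnion.mpr ⟨s, hs, hxs⟩)
  refine ⟨⟨?_, ?_⟩, ?_⟩
  · rintro t ht
    rcases mem_insert.mp ht with rfl | ht
    · exact ⟨hclique.card_eq, fun x hx y hy hxy => hclique.isClique hx hy hxy⟩
    · exact hT.1.1 t ht
  · intro s hs t ht hst
    rcases mem_insert.mp hs with rfl | hs <;> rcases mem_insert.mp ht with rfl | ht
    · exact absurd rfl hst
    · exact hdisj t ht
    · exact (hdisj s hs).symm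
    · exact hT.1.2 s hs t ht hst
  · intro t ht
    rcases mem_insert.mp ht with rfl | ht
    · have hu₁ := disjoint_right.mp h12 hu
      have hw₁ := disjoint_right.mp h13 hw
      have hv₂ := disjoint_left.mp h12 hv
      have hw₂ := disjoint_right.mp h23 hw
      have hv₃ := disjoint_left.mp h13 hv
      have hu₃ := disjoint_left.mp h23 hu
      simp [insert_inter_of_mem, insert_inter_of_notMem, *]
    · exact hT.2 t ht

lemma lt_card_nbhdIn_inter_of_maximal {ε p : ℝ} (hT : IsTransversalTrianglePacking G V₁ V₂ V₃ T)
    (hmax : ∀ T', IsTransversalTrianglePacking G V₁ V₂ V₃ T' → T'.card ≤ T.card)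
    (h12 : Disjoint V₁ V₂) (h13 : Disjoint V₁ V₃) (h23 : Disjoint V₂ V₃) {v : V} (hv : v ∈ V₁)
    (hvT : v ∉ T.biUnion id) (htv : TypicalVertex G ε p V₁ V₂ V₃ v) (hε : 0 ≤ ε)
    (hd : ε * p < (1 - ε) * dens G V₂ V₃) :
    (1 - 2 * ε) * (nbhdIn G v V₂).card < (nbhdIn G v V₂ ∩ T.biUnion id).card ∨
      (1 - 2 * ε) * (nbhdIn G v V₃).card < (nbhdIn G v V₃ ∩ T.biUnion id).card := by
  by_contra! hfree
  obtain ⟨u, hu, w, hw, huw⟩ := htv.exists_adj_sdiff hε hd hfree.1 hfree.2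
  simp only [mem_sdiff, nbhdIn, mem_filter] at hu hw
  obtain ⟨⟨hu₂, hvu⟩, huT⟩ := hu
  obtain ⟨⟨hw₃, hvw⟩, hwT⟩ := hw
  have hT' := hT.insert_triangle h12 h13 h23 hv hu₂ hw₃ hvu hvw huw <| by
    simp only [mem_insert, mem_singleton]
    rintro x (rfl | rfl | rfl) <;> assumption
  have hnew : {v, u, w} ∉ T := fun ht => hvT (mem_biUnion.mpr ⟨_, ht, by simp⟩)
  have hcard := hmax _ hT'
  rw [card_insert_of_notMem hnew] at hcard
  omega

end IsTransversalTrianglePacking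

end Packing

theorem TypicalTriple.one_sub_mul_min_card_le_card_of_maximal {V : Type*} [DecidableEq V]
    {G : SimpleGraph V} {ε p β δ : ℝ} {V₁ V₂ V₃ : Finset V} {T : Finset (Finset V)}
    (hε : 0 < ε) (hδ : 0 < δ) (hp : 0 < p) (hεβ : 8 * ε ≤ β) (hεβδ : 8 * ε ≤ β * δ)
    (hεδp : 4 * ε ≤ δ * p) (h12 : Disjoint V₁ V₂) (h13 : Disjoint V₁ V₃) (h23 : Disjoint V₂ V₃)
    (htyp : TypicalTriple G ε p V₁ V₂ V₃) (hd12 : δ * p ≤ dens G V₁ V₂)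
    (hd13 : δ * p ≤ dens G V₁ V₃) (hd23 : δ * p ≤ dens G V₂ V₃)
    (hT : IsTransversalTrianglePacking G V₁ V₂ V₃ T)
    (hmax : ∀ T', IsTransversalTrianglePacking G V₁ V₂ V₃ T' → T'.card ≤ T.card) :
    (1 - β) * min (V₁.card : ℝ) (min (V₂.card : ℝ) (V₃.card : ℝ)) ≤ T.card := by
  obtain ⟨⟨hreg12, hreg13, -⟩, hty1, -, -⟩ := htyp
  set R := T.biUnion id
  set m := min (V₁.card : ℝ) (min (V₂.card : ℝ) (V₃.card : ℝ))
  by_contra! hlt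
  have hβ : β < 1 := by
    by_contra! hβ
    nlinarith [T.card.cast_nonneg (α := ℝ), show 0 ≤ m by positivity]
  have hmiss : ∀ W : Finset V, (∀ t ∈ T, (t ∩ W).card = 1) → m ≤ W.card →
      ((W ∩ R).card : ℝ) < (1 - β) * W.card := fun W hW hmW =>
    calc ((W ∩ R).card : ℝ) ≤ T.card := by
          exact_mod_cast card_inter_biUnion_le fun t ht => (hW t ht).le
      _ < (1 - β) * m := hlt
      _ ≤ (1 - β) * W.card := by gcongr
  set U := (V₁ \ R).filter (TypicalVertex G ε p V₁ V₂ V₃)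
  have hU : (β - ε) * V₁.card < U.card := by
    have hsplit : (V₁.card : ℝ) ≤
        U.card + (V₁.filter fun v => ¬ TypicalVertex G ε p V₁ V₂ V₃ v).card + (V₁ ∩ R).card := by
      exact_mod_cast card_le_card_filter_sdiff_add V₁ R (TypicalVertex G ε p V₁ V₂ V₃)
    linarith [hmiss V₁ (fun t ht => (hT.2 t ht).1) (min_le_left _ _)]
  have hd : ε * p < (1 - ε) * dens G V₂ V₃ := by nlinarith
  have hUtyp : ∀ v ∈ U, TypicalVertex G ε p V₁ V₂ V₃ v := fun v hv => (mem_filter.mp hv).2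
  have hblocked : ∀ v ∈ U,
      (1 - 2 * ε) * (nbhdIn G v V₂).card < (nbhdIn G v V₂ ∩ R).card ∨
        (1 - 2 * ε) * (nbhdIn G v V₃).card < (nbhdIn G v V₃ ∩ R).card := fun v hv => by
    have hvR := (mem_filter.mp hv).1
    exact hT.lt_card_nbhdIn_inter_of_maximal hmax h12 h13 h23 (mem_sdiff.mp hvR).1
      (mem_sdiff.mp hvR).2 (hUtyp v hv) hε.le hd
  have hU₂ := hreg12.card_lt_of_card_inter_lt hε hδ hp hεβ hεβδ hεδp hd12
    (hmiss V₂ (fun t ht => (hT.2 t ht).2.1) ((min_le_right _ _).trans (min_le_left _ _)))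
    ((filter_subset _ U).trans ((filter_subset _ _).trans sdiff_subset))
    fun v hv => ⟨(hUtyp v (mem_filter.mp hv).1).1.1, (mem_filter.mp hv).2⟩
  have hU₃ := hreg13.card_lt_of_card_inter_lt hε hδ hp hεβ hεβδ hεδp hd13
    (hmiss V₃ (fun t ht => (hT.2 t ht).2.2) ((min_le_right _ _).trans (min_le_right _ _)))
    ((filter_subset _ U).trans ((filter_subset _ _).trans sdiff_subset))
    fun v hv => ⟨(hUtyp v (mem_filter.mp hv).1).2.1.1, (mem_filter.mp hv).2⟩
  have hcover := (card_le_card fun v hv => mem_union.mpr <| (hblocked v hv).imp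
    (fun h => mem_filter.mpr ⟨hv, h⟩) (fun h => mem_filter.mpr ⟨hv, h⟩)).trans (card_union_le _ _)
  have hcover' := (Nat.cast_le (α := ℝ)).mpr hcover
  push_cast at hcover'
  nlinarith [mul_nonneg (by linarith : 0 ≤ β - 3 * ε) (V₁.card.cast_nonneg (α := ℝ))]

end RandomTriangle

/-- **Proposition (almost perfect packing in typical triples).** For every positive `α`, `δ`,
`p` there exists `ε(α,δ) > 0` such that every `ε`-typical `(ε,p)`-regular triple of minimum
density at least `δp` contains `(1-α)·minᵢ|Vᵢ|` vertex-disjoint triangles. -/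
theorem stmt_4 (α δ p : ℝ) (hα : 0 < α) (hδ : 0 < δ) (hp : 0 < p) :
    ∃ ε : ℝ, 0 < ε ∧
      ∀ (V : Type) [Fintype V] [DecidableEq V] (G : SimpleGraph V)
        (V₁ V₂ V₃ : Finset V),
        Disjoint V₁ V₂ → Disjoint V₁ V₃ → Disjoint V₂ V₃ →
        TypicalTriple G ε p V₁ V₂ V₃ →
        δ * p ≤ dens G V₁ V₂ → δ * p ≤ dens G V₁ V₃ → δ * p ≤ dens G V₂ V₃ →
        ∃ T : Finset (Finset V), IsTrianglePacking G T ∧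
          (∀ t ∈ T, (t ∩ V₁).card = 1 ∧ (t ∩ V₂).card = 1 ∧ (t ∩ V₃).card = 1) ∧
          (1 - α) * (min (V₁.card : ℝ) (min (V₂.card : ℝ) (V₃.card : ℝ))) ≤ (T.card : ℝ) := by
  have h₁ := min_le_left (min α (α * δ)) (2 * δ * p)
  have h₂ := min_le_right (min α (α * δ)) (2 * δ * p)
  have h₃ := min_le_left α (α * δ)
  have h₄ := min_le_right α (α * δ)
  refine ⟨min (min α (α * δ)) (2 * δ * p) / 8, by positivity, ?_⟩
  intro V _ _ G V₁ V₂ V₃ h12 h13 h23 htyp hd12 hd13 hd23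
  obtain ⟨T, hT, hmax⟩ := exists_maximal_isTransversalTrianglePacking G V₁ V₂ V₃
  exact ⟨T, hT.1, hT.2, htyp.one_sub_mul_min_card_le_card_of_maximal (by positivity) hδ hp
    (by linarith) (by linarith) (by linarith) h12 h13 h23 hd12 hd13 hd23 hT hmax⟩
end
end

section
/- For every ρ ∈ (0, 1/2) and every positive real ξ there exists a constant D = D(ρ, ξ) such that asymptotically almost surely the random graph G(n,p) has the following property: for every vertex set W with |W| ≥ ξn, all but at most D·p^{-1} vertices v outside W satisfy deg(v, W) = (1 ± ρ)|W|p. -/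
open Finset

open scoped Classical

noncomputable section

open RandomTriangle

/-! For disjoint `U` and `W` the number `e(U, W)` of edges between them is binomial with `|U||W|`
trials, so by the exponential-moment bound (with `λ = ±ρ/2` and `e^λ ≤ 1 + λ + λ²`) it lies
outside `(1 ± ρ)|U||W|p` with probability at most `2 exp(-ρ²|U||W|p/4)`.
If some `W` with `|W| ≥ ξn` had more than `D/p` vertices of atypical degree into `W`, more than
`D/(2p)` of them would err on the same side; for the set `U` of these, `e(U, W)` deviates as above
while `|U||W|p ≥ Dξn/2`. For `D = 24/(ρ²ξ)` each such event has probability at most `2e^{-3n}`,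
and a union bound over the at most `4^n` pairs `(U, W)` leaves `2(4e^{-3})^n → 0`. -/

namespace RandomTriangle

section Gnp

variable {n : ℕ} {q : ℝ}

def gnpWeight (n : ℕ) (q : ℝ) (G : SimpleGraph (Fin n)) : ℝ :=
  q ^ #G.edgeFinset * (1 - q) ^ (n.choose 2 - #G.edgeFinset)

lemma gnpProb_eq_sum_gnpWeight (A : Set (SimpleGraph (Fin n))) :
    gnpProb n q A = ∑ G with G ∈ A, gnpWeight n q G := by
  have hE (G : SimpleGraph (Fin n)) :
      ({e | e ∈ G.edgeSet} : Finset (Sym2 (Fin n))) = G.edgeFinset := by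
    ext e; simp
  simp only [gnpProb, gnpWeight, hE]

lemma gnpWeight_nonneg (hq0 : 0 ≤ q) (hq1 : q ≤ 1) (G : SimpleGraph (Fin n)) :
    0 ≤ gnpWeight n q G :=
  mul_nonneg (pow_nonneg hq0 _) (pow_nonneg (sub_nonneg.2 hq1) _)

lemma sum_graphs_eq_sum_powerset {M : Type*} [AddCommMonoid M]
    (f : Finset (Sym2 (Fin n)) → M) :
    ∑ G : SimpleGraph (Fin n), f G.edgeFinset =
      ∑ S ∈ (⊤ : SimpleGraph (Fin n)).edgeFinset.powerset, f S := by
  refine Finset.sum_nbij' (fun G => G.edgeFinset) (fun S => SimpleGraph.fromEdgeSet S)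
    (fun _ _ => mem_powerset.2 (SimpleGraph.edgeFinset_mono le_top)) (fun _ _ => mem_univ _)
    (fun _ _ => by simp) (fun S hS => ?_) (fun _ _ => rfl)
  rw [mem_powerset, ← coe_subset, SimpleGraph.coe_edgeFinset, SimpleGraph.edgeSet_top] at hS
  rw [← coe_inj, SimpleGraph.coe_edgeFinset, SimpleGraph.edgeSet_fromEdgeSet,
    sdiff_eq_left, ← Set.subset_compl_iff_disjoint_right]
  exact hS

lemma sum_gnpWeight_mul_pow {E : Finset (Sym2 (Fin n))}
    (hE : E ⊆ (⊤ : SimpleGraph (Fin n)).edgeFinset) (x : ℝ) :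
    ∑ G, gnpWeight n q G * x ^ #(G.edgeFinset ∩ E) = (q * x + (1 - q)) ^ #E := by
  set T := (⊤ : SimpleGraph (Fin n)).edgeFinset
  have hT : #T = n.choose 2 := by
    rw [SimpleGraph.card_edgeFinset_top_eq_card_choose_two, Fintype.card_fin]
  let c : Sym2 (Fin n) → ℝ := fun e => if e ∈ E then x else 1
  have hc (S : Finset (Sym2 (Fin n))) : ∏ e ∈ S, c e = x ^ #(S ∩ E) := by
    rw [prod_ite, prod_const_one, mul_one, prod_const, filter_mem_eq_inter]
  calc ∑ G, gnpWeight n q G * x ^ #(G.edgeFinset ∩ E)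
      = ∑ S ∈ T.powerset, (∏ e ∈ S, q * c e) * ∏ e ∈ T \ S, (1 - q) := by
        rw [← sum_graphs_eq_sum_powerset
          (fun S => (∏ e ∈ S, q * c e) * ∏ e ∈ T \ S, (1 - q))]
        refine sum_congr rfl fun G _ => ?_
        rw [gnpWeight, prod_mul_distrib, hc, prod_const, prod_const,
          card_sdiff_of_subset (SimpleGraph.edgeFinset_mono le_top), hT]
        ring
    _ = ∏ e ∈ T, (q * c e + (1 - q)) := (prod_add _ _ _).symm
    _ = (q * x + (1 - q)) ^ #E := by
        rw [← inter_eq_right.2 hE, ← prod_const, ← prod_ite_mem]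
        refine prod_congr rfl fun e _ => ?_
        by_cases he : e ∈ E <;> simp [c, he]

lemma sum_gnpWeight : ∑ G, gnpWeight n q G = 1 := by
  simpa using sum_gnpWeight_mul_pow (q := q) (empty_subset _) 1

lemma gnpProb_compl (A : Set (SimpleGraph (Fin n))) : gnpProb n q Aᶜ = 1 - gnpProb n q A := by
  rw [eq_sub_iff_add_eq', ← sum_gnpWeight (q := q), gnpProb_eq_sum_gnpWeight,
    gnpProb_eq_sum_gnpWeight]
  convert sum_filter_add_sum_filter_not univ (· ∈ A) (gnpWeight n q) using 3
  ext; simp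

lemma gnpWeight_zero (G : SimpleGraph (Fin n)) : gnpWeight n 0 G = if G = ⊥ then 1 else 0 := by
  rw [gnpWeight, ← SimpleGraph.edgeFinset_eq_empty, ← card_eq_zero]
  split_ifs with hG <;> simp [hG]

lemma gnpProb_zero_of_bot_mem {A : Set (SimpleGraph (Fin n))} (h : ⊥ ∈ A) :
    gnpProb n 0 A = 1 := by
  simp [gnpProb_eq_sum_gnpWeight, gnpWeight_zero, h]

variable (hq0 : 0 ≤ q) (hq1 : q ≤ 1)
include hq0 hq1

lemma gnpProb_mono {A B : Set (SimpleGraph (Fin n))} (hAB : A ⊆ B) :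
    gnpProb n q A ≤ gnpProb n q B := by
  simp only [gnpProb_eq_sum_gnpWeight]
  exact sum_le_sum_of_subset_of_nonneg (monotone_filter_right _ fun _ _ h => hAB h)
    fun G _ _ => gnpWeight_nonneg hq0 hq1 G

lemma gnpProb_le_one (A : Set (SimpleGraph (Fin n))) : gnpProb n q A ≤ 1 := by
  rw [gnpProb_eq_sum_gnpWeight, ← sum_gnpWeight (q := q)]
  exact sum_le_univ_sum_of_nonneg fun G => gnpWeight_nonneg hq0 hq1 G

lemma gnpProb_union_le (A B : Set (SimpleGraph (Fin n))) :
    gnpProb n q (A ∪ B) ≤ gnpProb n q A + gnpProb n q B := by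
  simp only [gnpProb_eq_sum_gnpWeight, Set.mem_union, filter_or]
  exact (le_add_of_nonneg_right (sum_nonneg fun G _ => gnpWeight_nonneg hq0 hq1 G)).trans_eq
    (sum_union_inter ..)

lemma gnpProb_biUnion_le {ι : Type*} (s : Finset ι) (A : ι → Set (SimpleGraph (Fin n))) :
    gnpProb n q (⋃ i ∈ s, A i) ≤ ∑ i ∈ s, gnpProb n q (A i) := by
  induction s using Finset.induction_on with
  | empty => simp [gnpProb]
  | insert a s ha ih =>
    rw [set_biUnion_insert, sum_insert ha]
    exact (gnpProb_union_le hq0 hq1 _ _).trans (add_le_add le_rfl ih)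

lemma gnpProb_le_exp_of_abs_le_one {E : Finset (Sym2 (Fin n))}
    (hE : E ⊆ (⊤ : SimpleGraph (Fin n)).edgeFinset) {l : ℝ} (hl : |l| ≤ 1) (t : ℝ) :
    gnpProb n q {G | t ≤ l * #(G.edgeFinset ∩ E)} ≤ Real.exp (-t + #E * q * (l + l ^ 2)) := by
  have hbase : 0 ≤ q * Real.exp l + (1 - q) := by
    have := Real.exp_pos l
    nlinarith
  have hexp : Real.exp l - 1 ≤ l + l ^ 2 := by
    linarith [(abs_le.1 (Real.abs_exp_sub_one_sub_id_le hl)).2]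
  calc gnpProb n q {G | t ≤ l * #(G.edgeFinset ∩ E)}
      ≤ ∑ G, gnpWeight n q G * Real.exp (l * #(G.edgeFinset ∩ E) - t) := by
        rw [gnpProb_eq_sum_gnpWeight]
        refine (sum_le_sum fun G hG => ?_).trans (sum_le_univ_sum_of_nonneg fun G => ?_)
        · rw [mem_filter, Set.mem_ofPred_eq] at hG
          exact le_mul_of_one_le_right (gnpWeight_nonneg hq0 hq1 G)
            (Real.one_le_exp (by linarith [hG.2]))
        · exact mul_nonneg (gnpWeight_nonneg hq0 hq1 G) (Real.exp_pos _).le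
    _ = Real.exp (-t) * (q * Real.exp l + (1 - q)) ^ #E := by
        rw [← sum_gnpWeight_mul_pow hE, mul_sum]
        refine sum_congr rfl fun G _ => ?_
        rw [← Real.exp_nat_mul, mul_left_comm, ← Real.exp_add]
        ring_nf
    _ ≤ Real.exp (-t) * Real.exp (q * (Real.exp l - 1)) ^ #E := by
        gcongr
        linarith [Real.add_one_le_exp (q * (Real.exp l - 1))]
    _ ≤ Real.exp (-t + #E * q * (l + l ^ 2)) := by
        rw [← Real.exp_nat_mul, ← Real.exp_add, Real.exp_le_exp]
        linarith [mul_le_mul_of_nonneg_left hexp (mul_nonneg (Nat.cast_nonneg #E) hq0)]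

end Gnp

section Chernoff

variable {n : ℕ} {q : ℝ} (hq0 : 0 ≤ q) (hq1 : q ≤ 1) {E : Finset (Sym2 (Fin n))}
  (hE : E ⊆ (⊤ : SimpleGraph (Fin n)).edgeFinset) {ρ : ℝ} (hρ0 : 0 ≤ ρ) (hρ2 : ρ ≤ 2)
include hq0 hq1 hE hρ0 hρ2

lemma gnpProb_card_inter_ge :
    gnpProb n q {G | (1 + ρ) * (#E * q) ≤ #(G.edgeFinset ∩ E)} ≤
      Real.exp (-(ρ ^ 2 / 4) * (#E * q)) := by
  refine (gnpProb_mono hq0 hq1 fun G hG => ?_).trans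
    ((gnpProb_le_exp_of_abs_le_one hq0 hq1 hE (l := ρ / 2)
      (abs_le.2 ⟨by linarith, by linarith⟩) (ρ / 2 * ((1 + ρ) * (#E * q)))).trans_eq ?_)
  · exact mul_le_mul_of_nonneg_left (α := ℝ) hG (by positivity)
  · ring_nf

lemma gnpProb_card_inter_le :
    gnpProb n q {G | #(G.edgeFinset ∩ E) ≤ (1 - ρ) * (#E * q)} ≤
      Real.exp (-(ρ ^ 2 / 4) * (#E * q)) := by
  refine (gnpProb_mono hq0 hq1 fun G hG => ?_).trans
    ((gnpProb_le_exp_of_abs_le_one hq0 hq1 hE (l := -(ρ / 2))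
      (abs_le.2 ⟨by linarith, by linarith⟩) (-(ρ / 2) * ((1 - ρ) * (#E * q)))).trans_eq ?_)
  · exact mul_le_mul_of_nonpos_left (R := ℝ) hG (by linarith)
  · ring_nf

lemma gnpProb_card_inter_deviation_le :
    gnpProb n q {G | #(G.edgeFinset ∩ E) ≤ (1 - ρ) * (#E * q) ∨
        (1 + ρ) * (#E * q) ≤ #(G.edgeFinset ∩ E)} ≤
      2 * Real.exp (-(ρ ^ 2 / 4) * (#E * q)) := by
  rw [Set.ofPred_or, two_mul]
  exact (gnpProb_union_le hq0 hq1 _ _).trans (add_le_add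
    (gnpProb_card_inter_le hq0 hq1 hE hρ0 hρ2) (gnpProb_card_inter_ge hq0 hq1 hE hρ0 hρ2))

end Chernoff

section CrossEdges

variable {V : Type*} {U W : Finset V}

lemma injOn_mk_uncurry_product (hUW : Disjoint U W) :
    Set.InjOn Sym2.mk.uncurry (↑(U ×ˢ W) : Set (V × V)) := by
  rintro ⟨a, b⟩ hab ⟨c, d⟩ hcd h
  rw [coe_product, Set.mem_prod] at hab hcd
  rcases Sym2.eq_iff.1 h with ⟨rfl, rfl⟩ | ⟨rfl, rfl⟩
  · rfl
  · exact (disjoint_left.1 hUW hab.1 hcd.2).elim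

variable [DecidableEq V]

def crossEdges (U W : Finset V) : Finset (Sym2 V) := (U ×ˢ W).image Sym2.mk.uncurry

variable (hUW : Disjoint U W)
include hUW

lemma card_crossEdges : #(crossEdges U W) = #U * #W := by
  rw [crossEdges, card_image_of_injOn (injOn_mk_uncurry_product hUW), card_product]

lemma card_edgeFinset_inter_crossEdges (G : SimpleGraph V) [Fintype G.edgeSet] :
    #(G.edgeFinset ∩ crossEdges U W) = eBtw G U W := by
  rw [crossEdges, inter_comm, ← filter_mem_eq_inter, filter_image,
    card_image_of_injOn ((injOn_mk_uncurry_product hUW).mono (filter_subset _ _)), eBtw]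
  exact congrArg card (filter_congr fun _ _ => SimpleGraph.mem_edgeFinset)

lemma crossEdges_subset_edgeFinset_top [Fintype V] :
    crossEdges U W ⊆ (⊤ : SimpleGraph V).edgeFinset := by
  rintro _ he
  obtain ⟨⟨a, b⟩, hab, rfl⟩ := mem_image.1 he
  rw [mem_product] at hab
  simpa using fun h : a = b => disjoint_left.1 hUW hab.1 (h ▸ hab.2)

end CrossEdges

lemma gnpProb_eBtw_deviation_le {n : ℕ} {q : ℝ} (hq0 : 0 ≤ q) (hq1 : q ≤ 1)
    {U W : Finset (Fin n)} (hUW : Disjoint U W) {ρ : ℝ} (hρ0 : 0 ≤ ρ) (hρ2 : ρ ≤ 2) :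
    gnpProb n q {G | (eBtw G U W : ℝ) ≤ (1 - ρ) * (#U * #W * q) ∨
        (1 + ρ) * (#U * #W * q) ≤ eBtw G U W} ≤
      2 * Real.exp (-(ρ ^ 2 / 4) * (#U * #W * q)) := by
  have h := gnpProb_card_inter_deviation_le hq0 hq1 (crossEdges_subset_edgeFinset_top hUW) hρ0 hρ2
  simpa only [card_edgeFinset_inter_crossEdges hUW, card_crossEdges hUW, Nat.cast_mul] using h

section Deviation

variable {V : Type*} {G : SimpleGraph V} {U W : Finset V} {d : ℝ}

lemma eBtw_eq_sum_degIn (G : SimpleGraph V) (U W : Finset V) :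
    eBtw G U W = ∑ v ∈ U, degIn G v W := by
  simp only [eBtw, degIn, card_filter, sum_product]

lemma eBtw_le_of_forall_degIn_le (h : ∀ v ∈ U, (degIn G v W : ℝ) ≤ d) :
    (eBtw G U W : ℝ) ≤ #U * d := by
  rw [eBtw_eq_sum_degIn, Nat.cast_sum, ← nsmul_eq_mul]
  exact sum_le_card_nsmul _ _ _ h

lemma le_eBtw_of_forall_le_degIn (h : ∀ v ∈ U, d ≤ (degIn G v W : ℝ)) :
    #U * d ≤ (eBtw G U W : ℝ) := by
  rw [eBtw_eq_sum_degIn, Nat.cast_sum, ← nsmul_eq_mul]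
  exact card_nsmul_le_sum _ _ _ h

lemma exists_subset_eBtw_deviates (G : SimpleGraph V) (S W : Finset V) {ρ q c : ℝ}
    (h : 2 * c < #(S.filter fun v => ¬((1 - ρ) * #W * q ≤ (degIn G v W : ℝ) ∧
      (degIn G v W : ℝ) ≤ (1 + ρ) * #W * q))) :
    ∃ U ⊆ S, c < #U ∧ ((eBtw G U W : ℝ) ≤ (1 - ρ) * (#U * #W * q) ∨
      (1 + ρ) * (#U * #W * q) ≤ eBtw G U W) := by
  set L := S.filter fun v => (degIn G v W : ℝ) < (1 - ρ) * #W * q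
  set H := S.filter fun v => (1 + ρ) * #W * q < (degIn G v W : ℝ)
  have hLH : 2 * c < #L + #H := by
    refine h.trans_le ?_
    norm_cast
    refine (card_le_card fun v hv => ?_).trans (card_union_le L H)
    rw [mem_filter, not_and_or, not_le, not_le] at hv
    rw [mem_union, mem_filter, mem_filter]
    tauto
  by_cases hL : c < #L
  · refine ⟨L, filter_subset _ _, hL, Or.inl ?_⟩
    have := eBtw_le_of_forall_degIn_le (G := G) (U := L) (W := W) (d := (1 - ρ) * #W * q)
      fun v hv => (mem_filter.1 hv).2.le
    linarith
  · refine ⟨H, filter_subset _ _, by linarith, Or.inr ?_⟩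
    have := le_eBtw_of_forall_le_degIn (G := G) (U := H) (W := W) (d := (1 + ρ) * #W * q)
      fun v hv => (mem_filter.1 hv).2.le
    linarith

end Deviation

def FewIrregularVertices (ρ ξ D q : ℝ) {n : ℕ} (G : SimpleGraph (Fin n)) : Prop :=
  ∀ W : Finset (Fin n), ξ * n ≤ (#W : ℝ) →
    (#((univ \ W).filter fun v => ¬((1 - ρ) * #W * q ≤ (degIn G v W : ℝ) ∧
      (degIn G v W : ℝ) ≤ (1 + ρ) * #W * q)) : ℝ) ≤ D / q

section Main

variable {n : ℕ} {ρ ξ q : ℝ}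

lemma fewIrregularVertices_bot (D : ℝ) :
    FewIrregularVertices ρ ξ D 0 (⊥ : SimpleGraph (Fin n)) :=
  fun W _ => by simp [degIn]

lemma gnpProb_not_fewIrregularVertices_le (hρ0 : 0 < ρ) (hρ2 : ρ ≤ 2) (hξ : 0 < ξ)
    (hq : 0 < q) (hq1 : q ≤ 1) :
    gnpProb n q {G | FewIrregularVertices ρ ξ (24 / (ρ ^ 2 * ξ)) q G}ᶜ ≤
      2 * (4 * Real.exp (-3)) ^ n := by
  set D := 24 / (ρ ^ 2 * ξ)
  let deviation : Finset (Fin n) × Finset (Fin n) → Set (SimpleGraph (Fin n)) := fun UW =>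
    {G | (eBtw G UW.1 UW.2 : ℝ) ≤ (1 - ρ) * (#UW.1 * #UW.2 * q) ∨
      (1 + ρ) * (#UW.1 * #UW.2 * q) ≤ eBtw G UW.1 UW.2}
  let pairs := univ.filter fun UW : Finset (Fin n) × Finset (Fin n) =>
    Disjoint UW.1 UW.2 ∧ ξ * n ≤ #UW.2 ∧ D / (2 * q) < #UW.1
  have hcover : {G | FewIrregularVertices ρ ξ D q G}ᶜ ⊆ ⋃ UW ∈ pairs, deviation UW := by
    intro G hG
    obtain ⟨W, hW, hbad⟩ := not_forall₂.1 hG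
    have hc : 2 * (D / (2 * q)) = D / q := by field_simp
    obtain ⟨U, hUS, hU, hdev⟩ := exists_subset_eBtw_deviates G (univ \ W) W (ρ := ρ) (q := q)
      (c := D / (2 * q)) (hc ▸ not_le.1 hbad)
    have hUW : (U, W) ∈ pairs :=
      mem_filter.2 ⟨mem_univ _, disjoint_of_subset_left hUS sdiff_disjoint, hW, hU⟩
    exact Set.mem_iUnion₂.2 ⟨(U, W), hUW, hdev⟩
  have hdev : ∀ UW ∈ pairs, gnpProb n q (deviation UW) ≤ 2 * Real.exp (-3 * n) := by
    rintro ⟨U, W⟩ hUW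
    obtain ⟨-, hdisj, hW, hU⟩ := mem_filter.1 hUW
    refine (gnpProb_eBtw_deviation_le hq.le hq1 hdisj hρ0.le hρ2).trans ?_
    have hUq : D / 2 ≤ #U * q := by
      linarith [(div_lt_iff₀ (by positivity)).1 hU]
    have : 3 * (n : ℝ) ≤ ρ ^ 2 / 4 * (#U * q) * #W :=
      calc 3 * (n : ℝ) = ρ ^ 2 / 4 * (D / 2) * (ξ * n) := by simp only [D]; field_simp; ring
        _ ≤ ρ ^ 2 / 4 * (#U * q) * #W := by gcongr
    gcongr 2 * Real.exp ?_
    linarith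
  calc gnpProb n q {G | FewIrregularVertices ρ ξ D q G}ᶜ
      ≤ gnpProb n q (⋃ UW ∈ pairs, deviation UW) := gnpProb_mono hq.le hq1 hcover
    _ ≤ ∑ UW ∈ pairs, gnpProb n q (deviation UW) := gnpProb_biUnion_le hq.le hq1 _ _
    _ ≤ #pairs • (2 * Real.exp (-3 * n)) := sum_le_card_nsmul _ _ _ hdev
    _ ≤ 4 ^ n * (2 * Real.exp (-3 * n)) := by
        have hpairs : #pairs ≤ 4 ^ n := (card_le_univ pairs).trans_eq (by
          simp [Fintype.card_prod, Fintype.card_finset, ← mul_pow])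
        rw [nsmul_eq_mul]
        gcongr
        exact_mod_cast hpairs
    _ = 2 * (4 * Real.exp (-3)) ^ n := by
        rw [mul_pow, ← Real.exp_nat_mul]
        ring_nf

lemma one_sub_le_gnpProb_fewIrregularVertices (hρ0 : 0 < ρ) (hρ2 : ρ ≤ 2) (hξ : 0 < ξ)
    (hq0 : 0 ≤ q) (hq1 : q ≤ 1) :
    1 - 2 * (4 * Real.exp (-3)) ^ n ≤
      gnpProb n q {G | FewIrregularVertices ρ ξ (24 / (ρ ^ 2 * ξ)) q G} := by
  rcases hq0.eq_or_lt with rfl | hq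
  -- `G(n, 0)` is `⊥` almost surely, and `⊥` meets even the junk bound `D / 0 = 0`.
  · rw [gnpProb_zero_of_bot_mem (fewIrregularVertices_bot _)]
    linarith [show 0 ≤ 2 * (4 * Real.exp (-3)) ^ n by positivity]
  · linarith [gnpProb_compl (n := n) (q := q)
      {G | FewIrregularVertices ρ ξ (24 / (ρ ^ 2 * ξ)) q G},
      gnpProb_not_fewIrregularVertices_le (n := n) hρ0 hρ2 hξ hq hq1]

end Main

end RandomTriangle

/-- **Proposition (degrees into large sets).** For every `ρ ∈ (0,1/2)` and `ξ > 0` there is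
`D` such that a.a.s. for every `W` with `|W| ≥ ξn`, all but at most `D·p⁻¹` vertices outside
`W` have `(1 ± ρ)|W|p` neighbours in `W`. -/
theorem stmt_10 (ρ ξ : ℝ) (hρ0 : 0 < ρ) (hρ1 : ρ < 1 / 2) (hξ : 0 < ξ) :
    ∃ D : ℝ, 0 < D ∧
      ∀ p : ℕ → ℝ, (∀ n, 0 ≤ p n) → (∀ n, p n ≤ 1) →
        AAS p (fun n G =>
          ∀ W : Finset (Fin n), ξ * n ≤ (W.card : ℝ) →
            ((((Finset.univ : Finset (Fin n)) \ W).filter fun v =>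
                ¬ ((1 - ρ) * W.card * p n ≤ (degIn G v W : ℝ) ∧
                   (degIn G v W : ℝ) ≤ (1 + ρ) * W.card * p n)).card : ℝ) ≤ D / p n) := by
  refine ⟨24 / (ρ ^ 2 * ξ), by positivity, fun p hp0 hp1 => ?_⟩
  have hr : 4 * Real.exp (-3) < 1 := by
    rw [Real.exp_neg, ← div_eq_mul_inv, div_lt_one (Real.exp_pos 3)]
    linarith [Real.add_one_lt_exp (by norm_num : (3 : ℝ) ≠ 0)]
  have hlower : Filter.Tendsto (fun n : ℕ => 1 - 2 * (4 * Real.exp (-3)) ^ n) Filter.atTop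
      (nhds 1) := by
    simpa using ((tendsto_pow_atTop_nhds_zero_of_lt_one (by positivity) hr).const_mul 2).const_sub 1
  exact tendsto_of_tendsto_of_tendsto_of_le_of_le hlower tendsto_const_nhds
    (fun n => one_sub_le_gnpProb_fewIrregularVertices hρ0 (by linarith) hξ (hp0 n) (hp1 n))
    (fun n => gnpProb_le_one (hp0 n) (hp1 n) _)
end
end
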